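/- arXiv:2407.21411 — 5 statements merged into one kernel-verified Lean document; each statement's English description precedes it below -/
import Mathlib

section
/- For every α ∈ (1,2), the constant c_α := −α(α−1)/(Γ(2−α)·cos(πα/2)) is strictly positive, and for every y ∈ ℝ the integral ∫_ℝ (1 − cos(u·y))/|u|^{α+1} du converges absolutely and satisfies c_α · ∫_ℝ (1 − cos(u·y))/|u|^{α+1} du = 2·|y|^α. -/
/-!
Writing `Γ(α+1) t^(-(α+1)) = ∫₀^∞ s^α e^(-st) ds` and exchanging the order of integration,
`Γ(α+1) ∫₀^∞ (1 - cos t) t^(-(α+1)) dt = ∫₀^∞ s^α / (s(s²+1)) ds = ∫₀^∞ s^(α-1)/(1+s²) ds`,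
because the Laplace transform of `1 - cos` is `1/(s(s²+1))`. The substitution `s² = u` turns
the last integral into the Beta integral `½ B(α/2, 1 - α/2) = π / (2 sin(πα/2))`. Evenness and
the scaling `u ↦ u/|y|` then give
`∫ (1 - cos(uy))/|u|^(α+1) du = π |y|^α / (sin(πα/2) Γ(α+1))`,
and the reflection formula identifies `c_α` with `2 sin(πα/2) Γ(α+1) / π`.
-/

open MeasureTheory Real Set

lemma integral_Ioi_eq_integral_Ioo_comp_div_one_sub {E : Type*} [NormedAddCommGroup E]
    [NormedSpace ℝ E] (f : ℝ → E) :
    ∫ u in Ioi 0, f u = ∫ x in Ioo 0 1, ((1 - x) ^ 2)⁻¹ • f (x / (1 - x)) := by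
  have himage : (fun x : ℝ => x / (1 - x)) '' Ioo 0 1 = Ioi 0 := by
    ext u
    simp only [mem_image, mem_Ioo, mem_Ioi]
    constructor
    · rintro ⟨x, ⟨hx0, hx1⟩, rfl⟩
      exact div_pos hx0 (by linarith)
    · intro hu
      refine ⟨u / (1 + u), ⟨by positivity, by rw [div_lt_one (by linarith)]; linarith⟩, ?_⟩
      field_simp
      ring
  have hderiv : ∀ x ∈ Ioo (0:ℝ) 1,
      HasDerivWithinAt (fun x : ℝ => x / (1 - x)) ((1 - x) ^ 2)⁻¹ (Ioo 0 1) x := by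
    rintro x ⟨-, hx1⟩
    have hne : 1 - x ≠ 0 := by linarith
    refine (((hasDerivAt_id x).div ((hasDerivAt_id x).const_sub 1) hne).congr_deriv ?_)
      |>.hasDerivWithinAt
    simp only [id]
    field_simp
    ring
  have hinj : InjOn (fun x : ℝ => x / (1 - x)) (Ioo 0 1) := by
    rintro x ⟨-, hx1⟩ y ⟨-, hy1⟩ h
    have : 1 - x ≠ 0 := by linarith
    have : 1 - y ≠ 0 := by linarith
    field_simp at h
    linarith
  rw [← himage, integral_image_eq_integral_abs_deriv_smul measurableSet_Ioo hderiv hinj]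
  refine setIntegral_congr_fun measurableSet_Ioo fun x _ => ?_
  rw [abs_of_nonneg (by positivity)]

lemma integral_Ioo_rpow_mul_one_sub_rpow {a b : ℝ} (ha : 0 < a) (hb : 0 < b) :
    ∫ x in Ioo 0 1, x ^ (a - 1) * (1 - x) ^ (b - 1) = Gamma a * Gamma b / Gamma (a + b) := by
  have hB := Complex.Gamma_mul_Gamma_eq_betaIntegral (s := a) (t := b)
    (by simpa using ha) (by simpa using hb)
  have hbeta : Complex.betaIntegral a b
      = ((∫ x in Ioo 0 1, x ^ (a - 1) * (1 - x) ^ (b - 1) : ℝ) : ℂ) := by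
    rw [Complex.betaIntegral, intervalIntegral.integral_of_le zero_le_one,
      integral_Ioc_eq_integral_Ioo]
    refine (setIntegral_congr_fun measurableSet_Ioo fun x ⟨hx0, hx1⟩ => ?_).trans
      integral_ofReal
    change _ = ((x ^ (a - 1) * (1 - x) ^ (b - 1) : ℝ) : ℂ)
    rw [Complex.ofReal_mul, Complex.ofReal_cpow hx0.le, Complex.ofReal_cpow (by linarith)]
    push_cast
    rfl
  rw [hbeta, ← Complex.ofReal_add, Complex.Gamma_ofReal, Complex.Gamma_ofReal,
    Complex.Gamma_ofReal] at hB
  norm_cast at hB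
  rw [hB, mul_div_cancel_left₀ _ (Gamma_pos_of_pos (by positivity)).ne']

lemma integral_Ioi_rpow_div_one_add_rpow {a b : ℝ} (ha : 0 < a) (hb : 0 < b) :
    ∫ u in Ioi 0, u ^ (a - 1) / (1 + u) ^ (a + b) = Gamma a * Gamma b / Gamma (a + b) := by
  rw [integral_Ioi_eq_integral_Ioo_comp_div_one_sub, ← integral_Ioo_rpow_mul_one_sub_rpow ha hb]
  refine setIntegral_congr_fun measurableSet_Ioo fun x ⟨hx0, hx1⟩ => ?_
  have hx1' : 0 < 1 - x := by linarith
  have h1 : 1 + x / (1 - x) = (1 - x)⁻¹ := by field_simp; ring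
  have hsplit : (1 - x) ^ (a + b) = (1 - x) ^ (b - 1) * ((1 - x) ^ 2 * (1 - x) ^ (a - 1)) := by
    rw [← rpow_two, ← rpow_add hx1', ← rpow_add hx1']
    ring_nf
  rw [smul_eq_mul, h1, div_rpow hx0.le hx1'.le, inv_rpow hx1'.le, hsplit]
  field_simp

lemma integral_Ioi_rpow_div_one_add {a : ℝ} (ha0 : 0 < a) (ha1 : a < 1) :
    ∫ u in Ioi 0, u ^ (a - 1) / (1 + u) = π / sin (π * a) := by
  have h := integral_Ioi_rpow_div_one_add_rpow ha0 (sub_pos.2 ha1)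
  simp only [add_sub_cancel, rpow_one, Gamma_one, div_one] at h
  rw [h, Gamma_mul_Gamma_one_sub]

lemma integral_Ioi_rpow_div_one_add_sq {α : ℝ} (hα0 : 0 < α) (hα2 : α < 2) :
    ∫ s in Ioi 0, s ^ (α - 1) / (1 + s ^ 2) = π / (2 * sin (π * α / 2)) := by
  have h := integral_comp_rpow_Ioi_of_pos (g := fun u : ℝ => u ^ (α / 2 - 1) / (1 + u)) two_pos
  rw [integral_Ioi_rpow_div_one_add (by positivity) (by linarith), mul_div_assoc'] at h
  rw [div_mul_eq_div_div_swap, ← h, ← integral_div]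
  refine setIntegral_congr_fun measurableSet_Ioi fun x (hx : 0 < x) => ?_
  have hpow : x ^ ((2:ℝ) - 1) * (x ^ (2:ℝ)) ^ (α / 2 - 1) = x ^ (α - 1) := by
    rw [← rpow_mul hx.le, ← rpow_add hx]
    ring_nf
  rw [smul_eq_mul, ← hpow, rpow_two]
  field_simp

lemma re_exp_neg_mul_sub_exp_add_I_mul (s t : ℝ) :
    (Complex.exp (-s * t) - Complex.exp ((-s + Complex.I) * t)).re
      = (1 - cos t) * exp (-(s * t)) := by
  simp only [Complex.sub_re, Complex.exp_re, Complex.mul_re, Complex.mul_im, Complex.neg_re,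
    Complex.neg_im, Complex.add_re, Complex.add_im, Complex.ofReal_re, Complex.ofReal_im,
    Complex.I_re, Complex.I_im, neg_mul, neg_zero, mul_zero, sub_zero, zero_mul, add_zero,
    cos_zero, mul_one, zero_add, one_mul]
  ring

lemma integrableOn_one_sub_cos_mul_exp_neg_mul_Ioi {s : ℝ} (hs : 0 < s) :
    IntegrableOn (fun t : ℝ => (1 - cos t) * exp (-(s * t))) (Ioi 0) := by
  have h1 := integrableOn_exp_mul_complex_Ioi (a := -s) (by simpa using hs) 0
  have h2 := integrableOn_exp_mul_complex_Ioi (a := -s + Complex.I) (by simpa using hs) 0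
  have := (h1.sub h2).re
  simp only [Pi.sub_apply, RCLike.re_to_complex, re_exp_neg_mul_sub_exp_add_I_mul] at this
  exact this

lemma integral_one_sub_cos_mul_exp_neg_mul_Ioi {s : ℝ} (hs : 0 < s) :
    ∫ t in Ioi 0, (1 - cos t) * exp (-(s * t)) = 1 / (s * (s ^ 2 + 1)) := by
  have h1 := integrableOn_exp_mul_complex_Ioi (a := -s) (by simpa using hs) 0
  have h2 := integrableOn_exp_mul_complex_Ioi (a := -s + Complex.I) (by simpa using hs) 0
  have := integral_re (h1.sub h2)
  simp only [Pi.sub_apply, RCLike.re_to_complex, re_exp_neg_mul_sub_exp_add_I_mul] at this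
  rw [this, integral_sub h1 h2, integral_exp_mul_complex_Ioi (by simpa using hs),
    integral_exp_mul_complex_Ioi (by simpa using hs)]
  simp only [Complex.ofReal_zero, mul_zero, Complex.exp_zero, Complex.sub_re, Complex.div_re,
    Complex.normSq_apply, Complex.neg_re, Complex.one_re, Complex.ofReal_re, mul_neg, neg_mul,
    one_mul, neg_neg, Complex.neg_im, Complex.ofReal_im, neg_zero, add_zero, div_self_mul_self',
    Complex.one_im, zero_div, Complex.add_re, Complex.I_re, Complex.add_im, Complex.I_im, zero_add,
    mul_one, one_div, mul_inv_rev]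
  field_simp
  ring

lemma integrableOn_Ioi_one_sub_cos_mul_div_rpow {α : ℝ} (hα0 : 0 < α) (hα2 : α < 2)
    (y : ℝ) :
    IntegrableOn (fun u : ℝ => (1 - cos (u * y)) / u ^ (α + 1)) (Ioi 0) := by
  have hmeas : AEStronglyMeasurable (fun u : ℝ => (1 - cos (u * y)) / u ^ (α + 1)) :=
    (by fun_prop : Measurable _).aestronglyMeasurable
  have hnonneg : ∀ u, 0 ≤ 1 - cos (u * y) := fun u => sub_nonneg.2 (cos_le_one _)
  have hnear : IntegrableOn (fun u : ℝ => (1 - cos (u * y)) / u ^ (α + 1)) (Ioc 0 1) := by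
    have hdom : IntegrableOn (fun u : ℝ => y ^ 2 / 2 * u ^ (1 - α)) (Ioc 0 1) := by
      refine Integrable.const_mul ?_ _
      exact (intervalIntegrable_iff_integrableOn_Ioc_of_le zero_le_one).1
        (intervalIntegral.intervalIntegrable_rpow' (by linarith))
    refine hdom.mono' hmeas.restrict ?_
    filter_upwards [ae_restrict_mem measurableSet_Ioc] with u hu
    have hu0 : 0 < u := hu.1
    have hsplit : u ^ 2 = u ^ (1 - α) * u ^ (α + 1) := by
      rw [← rpow_add hu0, ← rpow_natCast]
      ring_nf
    rw [norm_of_nonneg (div_nonneg (hnonneg _) (by positivity)), div_le_iff₀ (by positivity)]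
    calc 1 - cos (u * y) ≤ (u * y) ^ 2 / 2 := by linarith [one_sub_sq_div_two_le_cos (x := u * y)]
      _ = y ^ 2 / 2 * u ^ (1 - α) * u ^ (α + 1) := by rw [mul_pow, hsplit]; ring
  have hfar : IntegrableOn (fun u : ℝ => (1 - cos (u * y)) / u ^ (α + 1)) (Ioi 1) := by
    have hdom : IntegrableOn (fun u : ℝ => 2 * u ^ (-(α + 1))) (Ioi 1) :=
      (integrableOn_Ioi_rpow_of_lt (by linarith) zero_lt_one).const_mul 2
    refine hdom.mono' hmeas.restrict ?_
    filter_upwards [ae_restrict_mem measurableSet_Ioi] with u hu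
    have hu0 : 0 < u := zero_lt_one.trans hu
    rw [norm_of_nonneg (div_nonneg (hnonneg _) (by positivity)), rpow_neg hu0.le,
      ← div_eq_mul_inv]
    gcongr
    linarith [neg_one_le_cos (u * y)]
  rw [← Ioc_union_Ioi_eq_Ioi zero_le_one]
  exact hnear.union hfar

lemma integral_Ioi_rpow_mul_exp_neg_mul {α t : ℝ} (hα : -1 < α) (ht : 0 < t) :
    ∫ s in Ioi 0, s ^ α * exp (-(s * t)) = Gamma (α + 1) / t ^ (α + 1) := by
  have h := integral_rpow_mul_exp_neg_mul_Ioi (a := α + 1) (by linarith) ht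
  rw [add_sub_cancel_right, div_rpow zero_le_one ht.le, one_rpow] at h
  simp_rw [mul_comm t] at h
  rw [h, one_div_mul_eq_div]

lemma integrableOn_Ioi_rpow_mul_exp_neg_mul {α t : ℝ} (hα : -1 < α) (ht : 0 < t) :
    IntegrableOn (fun s => s ^ α * exp (-(s * t))) (Ioi 0) :=
  .of_integral_ne_zero (by
    rw [integral_Ioi_rpow_mul_exp_neg_mul hα ht]
    exact (div_pos (Gamma_pos_of_pos (by linarith)) (by positivity)).ne')

lemma Gamma_mul_integral_Ioi_one_sub_cos_div_rpow {α : ℝ} (hα0 : 0 < α) (hα2 : α < 2) :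
    Gamma (α + 1) * ∫ t in Ioi 0, (1 - cos t) / t ^ (α + 1)
      = ∫ s in Ioi 0, s ^ (α - 1) / (1 + s ^ 2) := by
  have hα : -1 < α := by linarith
  set μ := volume.restrict (Ioi (0:ℝ))
  set F : ℝ → ℝ → ℝ := fun s t => s ^ α * ((1 - cos t) * exp (-(s * t)))
  have hF_nonneg : ∀ s t, 0 < s → 0 ≤ F s t := fun s t hs =>
    mul_nonneg (rpow_nonneg hs.le _) (mul_nonneg (sub_nonneg.2 (cos_le_one t)) (exp_pos _).le)
  have hinner_s :
      ∀ t, 0 < t → ∫ s, F s t ∂μ = Gamma (α + 1) * ((1 - cos t) / t ^ (α + 1)) := by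
    intro t ht
    simp_rw [F, μ, mul_left_comm _ (1 - cos t), integral_const_mul,
      integral_Ioi_rpow_mul_exp_neg_mul hα ht]
    ring
  have hinner_t : ∀ s, 0 < s → ∫ t, F s t ∂μ = s ^ (α - 1) / (1 + s ^ 2) := by
    intro s hs
    rw [integral_const_mul, integral_one_sub_cos_mul_exp_neg_mul_Ioi hs,
      rpow_sub_one hs.ne']
    field_simp
    ring
  have hint : Integrable (Function.uncurry F) (μ.prod μ) := by
    rw [integrable_prod_iff' (by fun_prop)]
    constructor
    · filter_upwards [ae_restrict_mem measurableSet_Ioi] with t (ht : 0 < t)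
      simpa only [F, Function.uncurry_apply_pair, mul_left_comm _ (1 - cos t)]
        using (integrableOn_Ioi_rpow_mul_exp_neg_mul hα ht).const_mul (1 - cos t)
    · refine ((integrableOn_Ioi_one_sub_cos_mul_div_rpow hα0 hα2 1).const_mul
        (Gamma (α + 1))).congr ?_
      filter_upwards [ae_restrict_mem measurableSet_Ioi] with t (ht : 0 < t)
      simp only [Function.uncurry_apply_pair, mul_one]
      rw [← hinner_s t ht]
      refine integral_congr_ae ?_
      filter_upwards [ae_restrict_mem measurableSet_Ioi] with s (hs : 0 < s)
      exact (norm_of_nonneg (hF_nonneg s t hs)).symm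
  calc Gamma (α + 1) * ∫ t in Ioi 0, (1 - cos t) / t ^ (α + 1)
      = ∫ t, ∫ s, F s t ∂μ ∂μ := by
        rw [← integral_const_mul]
        exact setIntegral_congr_fun measurableSet_Ioi fun t ht => (hinner_s t ht).symm
    _ = ∫ s, ∫ t, F s t ∂μ ∂μ := (integral_integral_swap hint).symm
    _ = ∫ s in Ioi 0, s ^ (α - 1) / (1 + s ^ 2) :=
        setIntegral_congr_fun measurableSet_Ioi fun s hs => hinner_t s hs

lemma integral_Ioi_one_sub_cos_div_rpow {α : ℝ} (hα0 : 0 < α) (hα2 : α < 2) :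
    ∫ t in Ioi 0, (1 - cos t) / t ^ (α + 1) = π / (2 * sin (π * α / 2) * Gamma (α + 1)) := by
  have hI := Gamma_mul_integral_Ioi_one_sub_cos_div_rpow hα0 hα2
  rw [integral_Ioi_rpow_div_one_add_sq hα0 hα2] at hI
  rw [← div_div, ← hI, mul_div_cancel_left₀ _ (Gamma_pos_of_pos (by linarith)).ne']

lemma cos_abs_mul (x y : ℝ) : cos (|x| * y) = cos (x * y) := by
  rw [← cos_abs, abs_mul, abs_abs, ← abs_mul, cos_abs]

lemma integrable_comp_abs_of_integrableOn_Ioi {E : Type*} [NormedAddCommGroup E] {f : ℝ → E}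
    (hf : IntegrableOn f (Ioi 0)) : Integrable (fun x => f |x|) := by
  have hIoi : IntegrableOn (fun x => f |x|) (Ioi 0) :=
    hf.congr_fun (fun x (hx : 0 < x) => by rw [abs_of_pos hx]) measurableSet_Ioi
  have hIic : IntegrableOn (fun x => f |x|) (Iic 0) := by
    have hneg : MeasurableEmbedding fun x : ℝ => -x := (Homeomorph.neg ℝ).measurableEmbedding
    rw [← Measure.map_neg_eq_self (volume : Measure ℝ), hneg.integrableOn_map_iff]
    simp_rw [Function.comp_def, abs_neg, neg_preimage, neg_Iic, neg_zero]
    exact Iff.mpr integrableOn_Ici_iff_integrableOn_Ioi hIoi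
  rw [← integrableOn_univ, ← Iic_union_Ioi (a := (0:ℝ))]
  exact hIic.union hIoi

lemma integral_Ioi_one_sub_cos_mul_div_rpow {α : ℝ} (hα : α ≠ 0) (y : ℝ) :
    ∫ u in Ioi 0, (1 - cos (u * y)) / u ^ (α + 1)
      = |y| ^ α * ∫ t in Ioi 0, (1 - cos t) / t ^ (α + 1) := by
  rcases eq_or_ne y 0 with rfl | hy
  · simp [zero_rpow hα]
  have hy' : 0 < |y| := abs_pos.2 hy
  have hscale := integral_comp_mul_right_Ioi (fun t => (1 - cos t) / t ^ (α + 1)) 0 hy'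
  rw [zero_mul, smul_eq_mul] at hscale
  calc ∫ u in Ioi 0, (1 - cos (u * y)) / u ^ (α + 1)
      = ∫ u in Ioi 0, |y| ^ (α + 1) * ((1 - cos (u * |y|)) / (u * |y|) ^ (α + 1)) := by
        refine setIntegral_congr_fun measurableSet_Ioi fun u (hu : 0 < u) => ?_
        rw [mul_rpow hu.le hy'.le, mul_comm u |y|, cos_abs_mul, mul_comm y u]
        field_simp
    _ = |y| ^ α * ∫ t in Ioi 0, (1 - cos t) / t ^ (α + 1) := by
        rw [integral_const_mul, hscale, ← mul_assoc, rpow_add hy', rpow_one,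
          mul_inv_cancel_right₀ hy'.ne']

lemma one_sub_cos_mul_div_abs_rpow_eq_comp_abs (α y : ℝ) :
    (fun u : ℝ => (1 - cos (u * y)) / |u| ^ (α + 1))
      = fun u => (fun t => (1 - cos (t * y)) / t ^ (α + 1)) |u| :=
  funext fun u => by simp only [cos_abs_mul]

lemma integral_one_sub_cos_mul_div_abs_rpow {α : ℝ} (hα0 : 0 < α) (hα2 : α < 2) (y : ℝ) :
    ∫ u, (1 - cos (u * y)) / |u| ^ (α + 1)
      = π * |y| ^ α / (sin (π * α / 2) * Gamma (α + 1)) := by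
  rw [one_sub_cos_mul_div_abs_rpow_eq_comp_abs,
    integral_comp_abs (f := fun t => (1 - cos (t * y)) / t ^ (α + 1)),
    integral_Ioi_one_sub_cos_mul_div_rpow hα0.ne', integral_Ioi_one_sub_cos_div_rpow hα0 hα2]
  field_simp

lemma integrable_one_sub_cos_mul_div_abs_rpow {α : ℝ} (hα0 : 0 < α) (hα2 : α < 2) (y : ℝ) :
    Integrable (fun u : ℝ => (1 - cos (u * y)) / |u| ^ (α + 1)) := by
  rw [one_sub_cos_mul_div_abs_rpow_eq_comp_abs]
  exact integrable_comp_abs_of_integrableOn_Ioi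
    (integrableOn_Ioi_one_sub_cos_mul_div_rpow hα0 hα2 y)

lemma sin_pi_mul_div_two_pos {α : ℝ} (hα0 : 0 < α) (hα2 : α < 2) : 0 < sin (π * α / 2) :=
  sin_pos_of_pos_of_lt_pi (by positivity) (by nlinarith [pi_pos])

lemma neg_mul_sub_one_div_Gamma_two_sub_mul_cos {α : ℝ} (hα0 : 0 < α) (hα2 : α < 2)
    (hα1 : α ≠ 1) :
    -(α * (α - 1)) / (Gamma (2 - α) * cos (π * α / 2))
      = 2 * sin (π * α / 2) * Gamma (α + 1) / π := by
  have hsin := sin_pi_mul_div_two_pos hα0 hα2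
  have hcos : cos (π * α / 2) ≠ 0 := by
    rcases hα1.lt_or_gt with h | h
    · exact (cos_pos_of_mem_Ioo ⟨by nlinarith [pi_pos], by nlinarith [pi_pos]⟩).ne'
    · exact (cos_neg_of_pi_div_two_lt_of_lt (by nlinarith [pi_pos]) (by nlinarith [pi_pos])).ne
  have hsin_two_mul : sin (π * α) = 2 * sin (π * α / 2) * cos (π * α / 2) := by
    rw [← sin_two_mul]
    ring_nf
  have hreflection :
      Gamma α * Gamma (1 - α) * (2 * sin (π * α / 2) * cos (π * α / 2)) = π := by
    rw [← hsin_two_mul, Gamma_mul_Gamma_one_sub, div_mul_cancel₀]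
    rw [hsin_two_mul]
    exact mul_ne_zero (by positivity) hcos
  have hGamma_two_sub : Gamma (2 - α) = (1 - α) * Gamma (1 - α) := by
    rw [← Gamma_add_one (sub_ne_zero.2 hα1.symm)]
    ring_nf
  have hGamma_one_sub : Gamma (1 - α) ≠ 0 := fun h =>
    pi_ne_zero (by rw [← hreflection, h]; ring)
  rw [hGamma_two_sub, Gamma_add_one hα0.ne', div_eq_div_iff (by
    simp [sub_ne_zero.2 hα1.symm, hcos, hGamma_one_sub]) pi_ne_zero]
  linear_combination α * (α - 1) * hreflection

/-- For every `α ∈ (1,2)`, the constant `c_α = -α(α-1)/(Γ(2-α) cos(πα/2))` is strictly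
positive, and for every `y ∈ ℝ` the integral `∫ (1 - cos (u y))/|u|^(α+1) du` converges
absolutely and `c_α · ∫ (1 - cos (u y))/|u|^(α+1) du = 2 |y|^α`. -/
theorem stmt0 (α : ℝ) (hα1 : 1 < α) (hα2 : α < 2) :
    0 < -(α * (α - 1)) / (Real.Gamma (2 - α) * Real.cos (Real.pi * α / 2)) ∧
    ∀ y : ℝ,
      Integrable (fun u : ℝ => (1 - Real.cos (u * y)) / |u| ^ (α + 1)) ∧
      (-(α * (α - 1)) / (Real.Gamma (2 - α) * Real.cos (Real.pi * α / 2))) *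
          (∫ u : ℝ, (1 - Real.cos (u * y)) / |u| ^ (α + 1)) = 2 * |y| ^ α := by
  have hα0 : 0 < α := by linarith
  have hsin : 0 < sin (π * α / 2) := sin_pi_mul_div_two_pos hα0 hα2
  have hΓ : 0 < Gamma (α + 1) := Gamma_pos_of_pos (by linarith)
  rw [neg_mul_sub_one_div_Gamma_two_sub_mul_cos hα0 hα2 hα1.ne']
  refine ⟨by positivity, fun y => ⟨integrable_one_sub_cos_mul_div_abs_rpow hα0 hα2 y, ?_⟩⟩
  rw [integral_one_sub_cos_mul_div_abs_rpow hα0 hα2]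
  field_simp
end

section
/- For every α ∈ (1,2), the integral ∫_ℝ (1 − K(v))/|v|^{α+1} dv is finite and strictly positive; consequently ψ(α) := c_α · ∫_ℝ (1 − K(v))/|v|^{α+1} dv is strictly positive. -/
/-!
Since `0 ≤ K ≤ 1` and `K = 1` on `[-1, 1]`, the integrand vanishes there and is bounded by
`|v|^(-(α+1)) ≤ 2^(α+1) (1 + |v|)^(-(α+1))` elsewhere, which is integrable because
`α + 1 > 1`. It is nonnegative and equals `|v|^(-(α+1)) > 0` on `[2, ∞)`, a set of infinite
measure, so the integral is positive. Finally `c_α > 0` because `Γ(2-α) > 0` and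
`cos(πα/2) < 0` for `α ∈ (1,2)`.
-/

open MeasureTheory Real

/-- The smooth truncation kernel `K`. -/
noncomputable def K (x : ℝ) : ℝ :=
  if |x| ≤ 1 then 1
  else if |x| < 2 then (1 + Real.exp (1 / (2 - |x|) + 1 / (1 - |x|)))⁻¹
  else 0

lemma K_of_abs_le_one {x : ℝ} (hx : |x| ≤ 1) : K x = 1 := if_pos hx

lemma K_of_two_le_abs {x : ℝ} (hx : 2 ≤ |x|) : K x = 0 := by
  rw [K, if_neg (by linarith), if_neg (by linarith)]

lemma K_nonneg (x : ℝ) : 0 ≤ K x := by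
  unfold K
  split_ifs <;> positivity

lemma K_le_one (x : ℝ) : K x ≤ 1 := by
  unfold K
  split_ifs
  · rfl
  · exact inv_le_one_of_one_le₀ (le_add_of_nonneg_right (exp_pos _).le)
  · exact zero_le_one

lemma measurable_K : Measurable K := by
  unfold K
  refine Measurable.ite (measurableSet_le measurable_abs measurable_const) measurable_const ?_
  refine Measurable.ite (measurableSet_lt measurable_abs measurable_const) ?_ measurable_const
  fun_prop

/-- The constant `c_α`. -/
noncomputable def stableConst (α : ℝ) : ℝ :=
  -(α * (α - 1)) / (Gamma (2 - α) * cos (π * α / 2))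

lemma cos_pi_mul_div_two_neg {α : ℝ} (h1 : 1 < α) (h3 : α < 3) : cos (π * α / 2) < 0 :=
  cos_neg_of_pi_div_two_lt_of_lt (by nlinarith [pi_pos]) (by nlinarith [pi_pos])

lemma stableConst_pos {α : ℝ} (h1 : 1 < α) (h2 : α < 2) : 0 < stableConst α :=
  div_pos_of_neg_of_neg (by nlinarith)
    (mul_neg_of_pos_of_neg (Gamma_pos_of_pos (by linarith))
      (cos_pi_mul_div_two_neg h1 (by linarith)))

lemma abs_rpow_neg_le_one_add_abs_rpow_neg {x p : ℝ} (hx : 1 ≤ |x|) (hp : 0 ≤ p) :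
    |x| ^ (-p) ≤ 2 ^ p * (1 + |x|) ^ (-p) := by
  have hx0 : 0 < |x| := one_pos.trans_le hx
  have h : (1 + |x|) ^ p ≤ 2 ^ p * |x| ^ p := by
    rw [← mul_rpow zero_le_two hx0.le]
    exact rpow_le_rpow (by positivity) (by linarith) hp
  rw [rpow_neg hx0.le, rpow_neg (by positivity), ← div_eq_mul_inv, le_div_iff₀ (by positivity),
    inv_mul_le_iff₀ (by positivity)]
  linarith [mul_comm (2 ^ p) (|x| ^ p)]

lemma integrable_div_abs_rpow {g : ℝ → ℝ} (hg : AEStronglyMeasurable g)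
    (hg_le : ∀ x, |g x| ≤ 1) (hg_zero : ∀ x, |x| ≤ 1 → g x = 0) {p : ℝ} (hp : 1 < p) :
    Integrable fun x => g x / |x| ^ p := by
  have hdom : Integrable fun x : ℝ => 2 ^ p * (1 + ‖x‖) ^ (-p) :=
    (integrable_one_add_norm (by simpa using hp)).const_mul _
  refine hdom.mono' (hg.div₀ (measurable_abs.pow_const p).aestronglyMeasurable)
    (Filter.Eventually.of_forall fun x => ?_)
  rcases le_or_gt |x| 1 with hx | hx
  · rw [hg_zero x hx, zero_div, norm_zero]
    positivity
  · have hx0 : 0 < |x| := one_pos.trans hx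
    calc ‖g x / |x| ^ p‖ = |g x| * |x| ^ (-p) := by
          rw [norm_div, norm_eq_abs, norm_eq_abs, abs_of_pos (rpow_pos_of_pos hx0 p),
            rpow_neg hx0.le, div_eq_mul_inv]
      _ ≤ 1 * |x| ^ (-p) := by gcongr; exact hg_le x
      _ ≤ 2 ^ p * (1 + ‖x‖) ^ (-p) := by
          rw [one_mul, norm_eq_abs]
          exact abs_rpow_neg_le_one_add_abs_rpow_neg hx.le (by linarith)

lemma integrable_one_sub_K_div_abs_rpow {p : ℝ} (hp : 1 < p) :
    Integrable fun v => (1 - K v) / |v| ^ p := by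
  refine integrable_div_abs_rpow (measurable_K.const_sub 1).aestronglyMeasurable
    (fun v => ?_) (fun v hv => by rw [K_of_abs_le_one hv, sub_self]) hp
  rw [abs_le]
  constructor <;> linarith [K_nonneg v, K_le_one v]

lemma integral_one_sub_K_div_abs_rpow_pos {p : ℝ} (hp : 1 < p) :
    0 < ∫ v, (1 - K v) / |v| ^ p := by
  have hnonneg : ∀ v, 0 ≤ (1 - K v) / |v| ^ p := fun v =>
    div_nonneg (sub_nonneg.mpr (K_le_one v)) (rpow_nonneg (abs_nonneg v) p)
  rw [integral_pos_iff_support_of_nonneg hnonneg (integrable_one_sub_K_div_abs_rpow hp)]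
  have hsupport : Set.Ici (2 : ℝ) ⊆ Function.support fun v => (1 - K v) / |v| ^ p := by
    intro v (hv : 2 ≤ v)
    have hv' : 2 ≤ |v| := hv.trans (le_abs_self v)
    rw [Function.mem_support, K_of_two_le_abs hv', sub_zero]
    exact (one_div_pos.mpr (rpow_pos_of_pos (by linarith) p)).ne'
  calc (0 : ENNReal) < volume (Set.Ici (2 : ℝ)) := by simp [volume_Ici]
    _ ≤ _ := measure_mono hsupport

/-- For every `α ∈ (1,2)`, the integral `∫ (1 - K v)/|v|^(α+1) dv` is finite and strictly
positive; consequently `ψ(α) = c_α ∫ (1 - K v)/|v|^(α+1) dv > 0`, where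
`c_α = -α(α-1)/(Γ(2-α) cos(πα/2)) > 0`. -/
theorem stmt3 (α : ℝ) (hα1 : 1 < α) (hα2 : α < 2) :
    Integrable (fun v : ℝ => (1 - K v) / |v| ^ (α + 1)) ∧
    0 < ∫ v : ℝ, (1 - K v) / |v| ^ (α + 1) ∧
    0 < (-(α * (α - 1)) / (Real.Gamma (2 - α) * Real.cos (Real.pi * α / 2))) *
        ∫ v : ℝ, (1 - K v) / |v| ^ (α + 1) := by
  have hp : 1 < α + 1 := by linarith
  have hpos := integral_one_sub_K_div_abs_rpow_pos hp
  exact ⟨integrable_one_sub_K_div_abs_rpow hp, hpos,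
    mul_pos (stableConst_pos hα1 hα2) hpos⟩
end

section
/- Let a > 0, σ > 0, δ̄ > 0, b ∈ ℝ, α ∈ (1,2), and let 1 ≤ p < 2a/σ². Define R(z) = (σ²/2)z² + (δ̄^α/α)z^α + b·z for z > 0. Then there exist ε ∈ (0,1) and u₀ ≥ 1 such that R(z) > 0 for all z ≥ u₀^{ε}, and the integral ∫_{u₀}^{∞} u^{p−1} · exp( − ∫_{u^{ε}}^{u} (a·z)/R(z) dz ) du is finite. -/
open MeasureTheory Real Filter Topology Set

/-!
Since `R(z) ~ (σ²/2) z²`, for any `c` with `c σ²/2 < a` the inner integrand eventually dominates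
`c / z`, so the inner integral is at least `c (1 - ε) log u` and the integrand is at most
`u ^ (p - 1 - c (1 - ε))`. Choosing `p < c < 2a/σ²` and then `ε` so small that `p < c (1 - ε)`
makes this exponent smaller than `-1`.
-/

noncomputable def branchingMechanism (σ δ α b z : ℝ) : ℝ :=
  σ ^ 2 / 2 * z ^ 2 + δ ^ α / α * z ^ α + b * z

section BranchingMechanism

variable {σ δ α b : ℝ}

theorem tendsto_branchingMechanism_div_sq (hα : α < 2) :
    Tendsto (fun z => branchingMechanism σ δ α b z / z ^ 2) atTop (𝓝 (σ ^ 2 / 2)) := by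
  have hlim : Tendsto (fun z : ℝ => σ ^ 2 / 2 + δ ^ α / α * z ^ (-(2 - α)) + b * z⁻¹) atTop
      (𝓝 (σ ^ 2 / 2 + δ ^ α / α * 0 + b * 0)) :=
    ((tendsto_rpow_neg_atTop (by linarith)).const_mul _ |>.const_add _).add
      (tendsto_inv_atTop_zero.const_mul _)
  rw [mul_zero, mul_zero, add_zero, add_zero] at hlim
  refine hlim.congr' ?_
  filter_upwards [eventually_gt_atTop 0] with z hz
  rw [neg_sub, rpow_sub hz, rpow_two, branchingMechanism]
  field_simp

theorem continuousOn_branchingMechanism :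
    ContinuousOn (branchingMechanism σ δ α b) (Ioi 0) := by
  have hpow : ContinuousOn (fun z : ℝ => z ^ α) (Ioi 0) :=
    continuousOn_id.rpow_const fun z hz => Or.inl (ne_of_gt hz)
  unfold branchingMechanism
  exact ((continuousOn_const.mul (continuousOn_id.pow 2)).add (continuousOn_const.mul hpow)).add
    (continuousOn_const.mul continuousOn_id)

theorem eventually_branchingMechanism_pos (hσ : σ ≠ 0) (hα : α < 2) :
    ∀ᶠ z in atTop, 0 < branchingMechanism σ δ α b z := by
  filter_upwards [(tendsto_branchingMechanism_div_sq hα).eventually_const_lt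
    (by positivity : (0 : ℝ) < σ ^ 2 / 2)] with z hz
  exact pos_of_mul_pos_left hz (inv_nonneg.mpr (sq_nonneg z))

theorem eventually_div_le_div_branchingMechanism {a c : ℝ} (hσ : σ ≠ 0) (hα : α < 2)
    (hc : c * (σ ^ 2 / 2) < a) :
    ∀ᶠ z in atTop, c / z ≤ a * z / branchingMechanism σ δ α b z := by
  filter_upwards [((tendsto_branchingMechanism_div_sq hα).const_mul c).eventually_lt_const hc,
    eventually_branchingMechanism_pos hσ hα, eventually_gt_atTop 0] with z hlt hR hz
  rw [← mul_div_assoc, div_lt_iff₀ (by positivity)] at hlt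
  rw [div_le_div_iff₀ hz hR, mul_assoc, ← sq]
  exact hlt.le

end BranchingMechanism

theorem exists_mem_Ioo_lt_mul_one_sub {p c : ℝ} (h : p < c) :
    ∃ ε ∈ Ioo (0 : ℝ) 1, p < c * (1 - ε) := by
  have hlim : Tendsto (fun ε : ℝ => c * (1 - ε)) (𝓝[>] 0) (𝓝 c) := by
    refine Tendsto.mono_left ?_ nhdsWithin_le_nhds
    exact (continuous_const.mul (continuous_const.sub continuous_id)).tendsto' 0 c (by simp)
  have hsmall : ∀ᶠ ε in 𝓝[>] (0 : ℝ), ε ∈ Ioo 0 1 := Ioo_mem_nhdsGT zero_lt_one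
  exact (hsmall.and (hlim.eventually_const_lt h)).exists

theorem continuous_intervalIntegral_bounds {f a b : ℝ → ℝ} (hf : Continuous f)
    (ha : Continuous a) (hb : Continuous b) :
    Continuous fun x => ∫ z in a x..b x, f z := by
  have hG := intervalIntegral.continuous_primitive (μ := volume)
    (fun x y => hf.intervalIntegrable x y) 0
  have hsub : ∀ x, (∫ z in a x..b x, f z) = (∫ z in 0..b x, f z) - ∫ z in 0..a x, f z :=
    fun x => (intervalIntegral.integral_interval_sub_left
      (hf.intervalIntegrable _ _) (hf.intervalIntegrable _ _)).symm
  simp only [hsub]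
  exact (hG.comp hb).sub (hG.comp ha)

section LowerBound

variable {g : ℝ → ℝ} {c Z₀ : ℝ}

theorem mul_log_sub_log_le_integral (hg : ContinuousOn g (Ici Z₀))
    (hgc : ∀ z, Z₀ ≤ z → c / z ≤ g z) {v u : ℝ} (hv : 0 < v) (hZv : Z₀ ≤ v) (hvu : v ≤ u) :
    c * (log u - log v) ≤ ∫ z in v..u, g z := by
  have hsub : uIcc v u ⊆ Ici Z₀ := by
    rw [uIcc_of_le hvu]; exact fun z hz => hZv.trans hz.1
  have hpos : ∀ z ∈ uIcc v u, z ≠ 0 := by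
    rw [uIcc_of_le hvu]; exact fun z hz => (hv.trans_le hz.1).ne'
  have hval : (∫ z in v..u, c / z) = c * (log u - log v) := by
    simp only [div_eq_mul_one_div c]
    rw [intervalIntegral.integral_const_mul, integral_one_div fun h => hpos 0 h rfl,
      log_div (hv.trans_le hvu).ne' hv.ne']
  rw [← hval]
  refine intervalIntegral.integral_mono_on hvu ?_ ((hg.mono hsub).intervalIntegrable)
    fun z hz => hgc z (hZv.trans hz.1)
  exact (continuousOn_const.div continuousOn_id hpos).intervalIntegrable

variable {p ε u₀ : ℝ}

theorem integrableOn_rpow_mul_exp_neg_integral (hg : ContinuousOn g (Ici Z₀))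
    (hgc : ∀ z, Z₀ ≤ z → c / z ≤ g z) (hε0 : 0 ≤ ε) (hε1 : ε ≤ 1) (hu₀ : 1 ≤ u₀)
    (hZu₀ : Z₀ ≤ u₀ ^ ε) (hp : p < c * (1 - ε)) :
    IntegrableOn (fun u => u ^ (p - 1) * exp (-∫ z in u ^ ε..u, g z)) (Ici u₀) := by
  have hbounds : ∀ u ∈ Ici u₀, Z₀ ≤ u ^ ε ∧ u ^ ε ≤ u := fun u hu =>
    ⟨hZu₀.trans (rpow_le_rpow (by linarith) hu hε0),
      rpow_le_self_of_one_le (hu₀.trans hu) hε1⟩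
  have hcont : ContinuousOn (fun u => ∫ z in u ^ ε..u, g z) (Ici u₀) := by
    set g' := fun z => g (max Z₀ z)
    have hg' : Continuous g' := hg.comp_continuous (continuous_const.max continuous_id)
      fun z => mem_Ici.mpr (le_max_left _ _)
    refine (continuous_intervalIntegral_bounds hg'
      (continuous_id.rpow_const fun _ => Or.inr hε0) continuous_id).continuousOn.congr ?_
    intro u hu
    refine intervalIntegral.integral_congr fun z hz => ?_
    rw [uIcc_of_le (hbounds u hu).2] at hz
    simp only [g', max_eq_right ((hbounds u hu).1.trans hz.1)]
  have hbound : ∀ u ∈ Ici u₀,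
      ‖u ^ (p - 1) * exp (-∫ z in u ^ ε..u, g z)‖ ≤ u ^ (p - 1 - c * (1 - ε)) := by
    intro u hu
    have hu0 : 0 < u := zero_lt_one.trans_le (hu₀.trans hu)
    have hlog := mul_log_sub_log_le_integral hg hgc (rpow_pos_of_pos hu0 ε)
      (hbounds u hu).1 (hbounds u hu).2
    rw [log_rpow hu0, show log u - ε * log u = (1 - ε) * log u by ring] at hlog
    rw [norm_of_nonneg (by positivity), sub_eq_add_neg (p - 1), rpow_add hu0,
      rpow_def_of_pos hu0 (-_)]
    gcongr
    linarith
  refine Integrable.mono' ?_ ((continuousOn_id.rpow_const fun u hu => Or.inl ?_).mul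
    (continuous_exp.comp_continuousOn hcont.neg) |>.aestronglyMeasurable measurableSet_Ici)
    ((ae_restrict_iff' measurableSet_Ici).mpr (Eventually.of_forall hbound))
  · exact (integrableOn_Ici_iff_integrableOn_Ioi).mpr
      (integrableOn_Ioi_rpow_of_lt (by linarith) (by linarith))
  · exact (zero_lt_one.trans_le (hu₀.trans hu)).ne'

end LowerBound

theorem stmt8_general (a σ δ b α p : ℝ) (hσ : 0 < σ)
    (hα2 : α < 2) (hp2 : p < 2 * a / σ ^ 2) :
    ∃ ε ∈ Set.Ioo (0 : ℝ) 1, ∃ u₀ : ℝ, 1 ≤ u₀ ∧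
      (∀ z : ℝ, u₀ ^ ε ≤ z → 0 < σ ^ 2 / 2 * z ^ 2 + δ ^ α / α * z ^ α + b * z) ∧
      IntegrableOn
        (fun u : ℝ => u ^ (p - 1) *
          Real.exp (-(∫ z in u ^ ε..u,
            a * z / (σ ^ 2 / 2 * z ^ 2 + δ ^ α / α * z ^ α + b * z))))
        (Set.Ici u₀) := by
  obtain ⟨c, hpc, hca⟩ := exists_between hp2
  have hc : c * (σ ^ 2 / 2) < a := by
    rw [lt_div_iff₀ (by positivity)] at hca; linarith
  obtain ⟨ε, ⟨hε0, hε1⟩, hp⟩ := exists_mem_Ioo_lt_mul_one_sub hpc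
  obtain ⟨Z₀, hZ₀⟩ := eventually_atTop.mp
    (((eventually_branchingMechanism_pos (δ := δ) (b := b) hσ.ne' hα2).and
      (eventually_div_le_div_branchingMechanism hσ.ne' hα2 hc)).and (eventually_ge_atTop 1))
  have hZ₀1 : 1 ≤ Z₀ := (hZ₀ Z₀ le_rfl).2
  have hZ₀ε : (Z₀ ^ ε⁻¹) ^ ε = Z₀ := rpow_inv_rpow (by linarith) hε0.ne'
  refine ⟨ε, ⟨hε0, hε1⟩, Z₀ ^ ε⁻¹, one_le_rpow hZ₀1 (by positivity),
    fun z hz => (hZ₀ z (hZ₀ε ▸ hz)).1.1, ?_⟩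
  have hcont : ContinuousOn (fun z => a * z / branchingMechanism σ δ α b z) (Ici Z₀) :=
    (continuousOn_const.mul continuousOn_id).div
      (continuousOn_branchingMechanism.mono fun z hz => zero_lt_one.trans_le (hZ₀1.trans hz))
      fun z hz => (hZ₀ z hz).1.1.ne'
  exact integrableOn_rpow_mul_exp_neg_integral hcont (fun z hz => (hZ₀ z hz).1.2)
    hε0.le hε1.le (one_le_rpow hZ₀1 (by positivity)) hZ₀ε.ge hp

/-- For the stable CIR branching mechanism `R(z) = (σ²/2)z² + (δ̄^α/α)z^α + bz` and any
`1 ≤ p < 2a/σ²`, there are `ε ∈ (0,1)` and `u₀ ≥ 1` with `R > 0` on `[u₀^ε, ∞)` and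
`∫_{u₀}^∞ u^(p-1) exp(-∫_{u^ε}^u a z / R(z) dz) du < ∞`. -/
theorem stmt8 (a σ δ b α p : ℝ) (ha : 0 < a) (hσ : 0 < σ) (hδ : 0 < δ)
    (hα1 : 1 < α) (hα2 : α < 2) (hp1 : 1 ≤ p) (hp2 : p < 2 * a / σ ^ 2) :
    ∃ ε ∈ Set.Ioo (0 : ℝ) 1, ∃ u₀ : ℝ, 1 ≤ u₀ ∧
      (∀ z : ℝ, u₀ ^ ε ≤ z → 0 < σ ^ 2 / 2 * z ^ 2 + δ ^ α / α * z ^ α + b * z) ∧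
      IntegrableOn
        (fun u : ℝ => u ^ (p - 1) *
          Real.exp (-(∫ z in u ^ ε..u,
            a * z / (σ ^ 2 / 2 * z ^ 2 + δ ^ α / α * z ^ α + b * z))))
        (Set.Ici u₀) :=
  stmt8_general a σ δ b α p hσ hα2 hp2
end

section
/- Let a > 0, σ > 0, δ̄ > 0, b ∈ ℝ, α ∈ (1,2) and ε ∈ (0,1). Define R(z) = (σ²/2)z² + (δ̄^α/α)z^α + b·z for z > 0 and g(u) = 1 + 2δ̄^α/(α σ² u^{ε(2−α)}) for u > 0. Then there exists u₁ ≥ 1 such that for all u ≥ u₁ and all z ∈ [u^{ε}, u]: R(z) > 0, z·g(u) + 2b/σ² > 0, and (a·z)/R(z) ≥ (2a/σ²)/(z·g(u) + 2b/σ²); consequently ∫_{u^{ε}}^{u} (a·z)/R(z) dz ≥ (2a/(σ² g(u))) · ln( (u·g(u) + 2b/σ²)/(u^{ε}·g(u) + 2b/σ²) ). -/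
open MeasureTheory Real

/-!
On `[u^ε, u]` the term `(δ̄^α/α) z^α` of `R` is at most `(δ̄^α/α) z² / u^(ε(2-α))`, because
`z^(2-α) ≥ u^(ε(2-α))` there. Hence `R(z) ≤ (σ²/2) z (z g(u) + 2b/σ²)`, which is the pointwise
bound once both sides are positive; positivity holds as soon as `u^ε ≥ 1 + 2|b|/σ²`. The
integral bound follows by integrating the pointwise bound, the right-hand side being an
integral of `1/(affine)`, i.e. a logarithm.
-/

theorem integral_div_mul_add {k G β x y : ℝ} (hG : G ≠ 0)
    (h0 : (0 : ℝ) ∉ Set.uIcc (x * G + β) (y * G + β)) :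
    ∫ z in x..y, k / (z * G + β) = k / G * log ((y * G + β) / (x * G + β)) := by
  simp only [mul_comm _ G, div_eq_mul_one_div k] at h0 ⊢
  rw [intervalIntegral.integral_comp_mul_add (fun t => k * (1 / t)) hG,
    intervalIntegral.integral_const_mul, integral_one_div h0, smul_eq_mul]
  ring

theorem div_mul_log_le_integral {f : ℝ → ℝ} {k G β x y : ℝ} (hxy : x ≤ y) (hG : 0 < G)
    (hx : 0 < x * G + β) (hf : ContinuousOn f (Set.Icc x y))
    (hle : ∀ z ∈ Set.Icc x y, k / (z * G + β) ≤ f z) :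
    k / G * log ((y * G + β) / (x * G + β)) ≤ ∫ z in x..y, f z := by
  have hpos : ∀ z ∈ Set.Icc x y, 0 < z * G + β := fun z hz => hx.trans_le (by gcongr; exact hz.1)
  have h0 : (0 : ℝ) ∉ Set.uIcc (x * G + β) (y * G + β) := by
    rw [Set.uIcc_of_le (by gcongr)]
    exact fun h => h.1.not_gt hx
  have hcont : ContinuousOn (fun z => k / (z * G + β)) (Set.Icc x y) :=
    continuousOn_const.div (by fun_prop) fun z hz => (hpos z hz).ne'
  rw [← integral_div_mul_add hG.ne' h0]
  exact intervalIntegral.integral_mono_on hxy (hcont.intervalIntegrable_of_Icc hxy)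
    (hf.intervalIntegrable_of_Icc hxy) hle

theorem rpow_mul_rpow_mul_sub_le_sq {u z ε α : ℝ} (hu : 0 < u) (hz : u ^ ε ≤ z) (hα : α ≤ 2) :
    z ^ α * u ^ (ε * (2 - α)) ≤ z ^ 2 := by
  have hz0 : 0 < z := (rpow_pos_of_pos hu ε).trans_le hz
  calc z ^ α * u ^ (ε * (2 - α)) = z ^ α * (u ^ ε) ^ (2 - α) := by rw [rpow_mul hu.le]
    _ ≤ z ^ α * z ^ (2 - α) := by gcongr
    _ = z ^ 2 := by rw [← rpow_add hz0, add_sub_cancel, rpow_two]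

section Positivity

variable {σ b z : ℝ}

theorem abs_lt_of_one_add_le (hσ : 0 < σ) (hz : 1 + 2 * |b| / σ ^ 2 ≤ z) :
    |b| < σ ^ 2 / 2 * z := by
  have : σ ^ 2 / 2 * (1 + 2 * |b| / σ ^ 2) = σ ^ 2 / 2 + |b| := by field_simp
  nlinarith [pow_pos hσ 2]

theorem sq_add_add_mul_pos {c : ℝ} (hz : 0 < z) (hb : |b| < σ ^ 2 / 2 * z) (hc : 0 ≤ c) :
    0 < σ ^ 2 / 2 * z ^ 2 + c + b * z := by
  nlinarith [mul_pos hz (show 0 < σ ^ 2 / 2 * z + b by linarith [neg_abs_le b])]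

theorem mul_add_div_sq_pos {G : ℝ} (hσ : 0 < σ) (hz : 0 < z) (hb : |b| < σ ^ 2 / 2 * z)
    (hG : 1 ≤ G) : 0 < z * G + 2 * b / σ ^ 2 := by
  have : -z < 2 * b / σ ^ 2 := by
    rw [lt_div_iff₀ (by positivity)]
    linarith [neg_abs_le b]
  nlinarith

end Positivity

theorem div_le_div_of_rpow_mul_le_sq {a σ δ b α z P : ℝ} (ha : 0 ≤ a) (hσ : 0 < σ)
    (hδ : 0 ≤ δ ^ α) (hα : 0 < α) (hP : 0 < P) (hzP : z ^ α * P ≤ z ^ 2)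
    (hR : 0 < σ ^ 2 / 2 * z ^ 2 + δ ^ α / α * z ^ α + b * z)
    (hB : 0 < z * (1 + 2 * δ ^ α / (α * σ ^ 2 * P)) + 2 * b / σ ^ 2) :
    2 * a / σ ^ 2 / (z * (1 + 2 * δ ^ α / (α * σ ^ 2 * P)) + 2 * b / σ ^ 2) ≤
      a * z / (σ ^ 2 / 2 * z ^ 2 + δ ^ α / α * z ^ α + b * z) := by
  rw [div_le_div_iff₀ hB hR, ← sub_nonneg]
  have key : a * z * (z * (1 + 2 * δ ^ α / (α * σ ^ 2 * P)) + 2 * b / σ ^ 2) -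
        2 * a / σ ^ 2 * (σ ^ 2 / 2 * z ^ 2 + δ ^ α / α * z ^ α + b * z) =
      2 * a * δ ^ α / (α * σ ^ 2 * P) * (z ^ 2 - z ^ α * P) := by
    field_simp
    ring
  rw [key]
  exact mul_nonneg (by positivity) (sub_nonneg.2 hzP)

/-- With `R(z) = (σ²/2)z² + (δ̄^α/α)z^α + bz` and `g(u) = 1 + 2δ̄^α/(ασ²u^(ε(2-α)))`,
there is `u₁ ≥ 1` such that for all `u ≥ u₁` and all `z ∈ [u^ε, u]`: `R(z) > 0`,
`z g(u) + 2b/σ² > 0`, `a z / R(z) ≥ (2a/σ²)/(z g(u) + 2b/σ²)`, and consequently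
`∫_{u^ε}^u a z / R(z) dz ≥ (2a/(σ² g(u))) ln((u g(u) + 2b/σ²)/(u^ε g(u) + 2b/σ²))`. -/
theorem stmt9 (a σ δ b α ε : ℝ) (ha : 0 < a) (hσ : 0 < σ) (hδ : 0 < δ)
    (hα1 : 1 < α) (hα2 : α < 2) (hε1 : 0 < ε) (hε2 : ε < 1) :
    ∃ u₁ : ℝ, 1 ≤ u₁ ∧ ∀ u : ℝ, u₁ ≤ u →
      (∀ z ∈ Set.Icc (u ^ ε) u,
        0 < σ ^ 2 / 2 * z ^ 2 + δ ^ α / α * z ^ α + b * z ∧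
        0 < z * (1 + 2 * δ ^ α / (α * σ ^ 2 * u ^ (ε * (2 - α)))) + 2 * b / σ ^ 2 ∧
        (2 * a / σ ^ 2) /
            (z * (1 + 2 * δ ^ α / (α * σ ^ 2 * u ^ (ε * (2 - α)))) + 2 * b / σ ^ 2) ≤
          a * z / (σ ^ 2 / 2 * z ^ 2 + δ ^ α / α * z ^ α + b * z)) ∧
      (2 * a / (σ ^ 2 * (1 + 2 * δ ^ α / (α * σ ^ 2 * u ^ (ε * (2 - α)))))) *
          Real.log
            ((u * (1 + 2 * δ ^ α / (α * σ ^ 2 * u ^ (ε * (2 - α)))) + 2 * b / σ ^ 2) /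
              (u ^ ε * (1 + 2 * δ ^ α / (α * σ ^ 2 * u ^ (ε * (2 - α)))) + 2 * b / σ ^ 2)) ≤
        ∫ z in u ^ ε..u, a * z / (σ ^ 2 / 2 * z ^ 2 + δ ^ α / α * z ^ α + b * z) := by
  set K := 1 + 2 * |b| / σ ^ 2
  have hK : 1 ≤ K := le_add_of_nonneg_right (by positivity)
  refine ⟨K ^ ε⁻¹, one_le_rpow hK (by positivity), fun u hu => ?_⟩
  have hu : 1 ≤ u := (one_le_rpow hK (by positivity)).trans hu
  have hKu : K ≤ u ^ ε := (rpow_inv_le_iff_of_pos (by positivity) (by positivity) hε1).1 ‹_›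
  have huεu : u ^ ε ≤ u := rpow_le_self_of_one_le hu hε2.le
  have hP : 0 < u ^ (ε * (2 - α)) := by positivity
  set G := 1 + 2 * δ ^ α / (α * σ ^ 2 * u ^ (ε * (2 - α)))
  have hG : 1 ≤ G := le_add_of_nonneg_right (by positivity)
  have pointwise : ∀ z ∈ Set.Icc (u ^ ε) u,
      0 < σ ^ 2 / 2 * z ^ 2 + δ ^ α / α * z ^ α + b * z ∧ 0 < z * G + 2 * b / σ ^ 2 ∧
        2 * a / σ ^ 2 / (z * G + 2 * b / σ ^ 2) ≤
          a * z / (σ ^ 2 / 2 * z ^ 2 + δ ^ α / α * z ^ α + b * z) := fun z hz => by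
    have hz0 : 0 < z := (rpow_pos_of_pos (by linarith) ε).trans_le hz.1
    have hb := abs_lt_of_one_add_le hσ (hKu.trans hz.1)
    have hR := sq_add_add_mul_pos hz0 hb (c := δ ^ α / α * z ^ α) (by positivity)
    have hB := mul_add_div_sq_pos hσ hz0 hb hG
    exact ⟨hR, hB, div_le_div_of_rpow_mul_le_sq ha.le hσ (by positivity) (by positivity) hP
      (rpow_mul_rpow_mul_sub_le_sq (by positivity) hz.1 hα2.le) hR hB⟩
  refine ⟨pointwise, ?_⟩
  rw [← div_div (2 * a)]
  refine div_mul_log_le_integral huεu (by positivity) (pointwise _ ⟨le_rfl, huεu⟩).2.1 ?_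
    fun z hz => (pointwise z hz).2.2
  exact ContinuousOn.div (by fun_prop) (by fun_prop (disch := positivity))
    fun z hz => (pointwise z hz).1.ne'
end

section
/- Let 1 < a̲ ≤ ā < 2. There exists a constant C > 0 (depending only on a̲ and ā) such that for all x, y > 0: sup_{α ∈ [a̲, ā]} | y^{1 − α/2}·ln√y − x^{1 − α/2}·ln√x | ≤ C · |y − x| · (1 + 1/x). -/
/-!
Put `c = 1 - α/2 ∈ [1 - ā/2, 1/2)` and `g t = t^c ln t`, so the quantity to bound is
`|g y - g x| / 2`. Since `t^c ln t` is bounded near `0` by `1/c` and grows at most like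
`t / (1 - c)`, both `|g t|` and `t |g' t| = |c g t + t^c|` are `O(1/c + t)` uniformly in `c`.
If `y ≥ x/2` the mean value theorem on `[x/2, ∞)` gives `|g y - g x| ≤ 2 (1 + 2/x) |y - x|`;
if `y < x/2` then `|y - x| ≥ x/2` and the crude bound `|g y| + |g x|` suffices.
-/

open Real

lemma rpow_mul_log_le_div_one_sub {c t : ℝ} (hc : c < 1) (ht : 0 ≤ t) :
    t ^ c * log t ≤ t / (1 - c) := by
  rcases ht.eq_or_lt with rfl | ht
  · simp
  calc t ^ c * log t ≤ t ^ c * (t ^ (1 - c) / (1 - c)) := by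
        gcongr
        exact log_le_rpow_div ht.le (by linarith)
    _ = t / (1 - c) := by rw [← mul_div_assoc, ← rpow_add ht, add_sub_cancel, rpow_one]

lemma abs_rpow_mul_log_le {c t : ℝ} (hc0 : 0 < c) (hc1 : c ≤ 1 / 2) (ht : 0 < t) :
    |t ^ c * log t| ≤ 1 / c + 2 * t := by
  rcases le_or_gt t 1 with ht1 | ht1
  · have := abs_log_mul_self_rpow_lt t c ht ht1 hc0
    rw [mul_comm]
    linarith
  · have hle := rpow_mul_log_le_div_one_sub (by linarith) ht.le (c := c)
    have : t / (1 - c) ≤ 2 * t := by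
      rw [div_le_iff₀ (by linarith)]
      nlinarith
    rw [abs_of_nonneg (by have := log_nonneg ht1.le; positivity)]
    have : 0 < 1 / c := by positivity
    linarith

lemma rpow_le_one_add {c t : ℝ} (hc0 : 0 ≤ c) (hc1 : c ≤ 1) (ht : 0 ≤ t) : t ^ c ≤ 1 + t := by
  rcases le_or_gt t 1 with ht1 | ht1
  · linarith [rpow_le_one ht ht1 hc0]
  · linarith [rpow_le_self_of_one_le ht1.le hc1]

lemma hasDerivAt_rpow_mul_log (c : ℝ) {t : ℝ} (ht : 0 < t) :
    HasDerivAt (fun s ↦ s ^ c * log s) ((c * (t ^ c * log t) + t ^ c) / t) t := by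
  have h := (hasDerivAt_rpow_const (p := c) (Or.inl ht.ne')).mul (hasDerivAt_log ht.ne')
  refine h.congr_deriv ?_
  rw [rpow_sub_one ht.ne']
  field_simp

lemma abs_deriv_rpow_mul_log_le {c t : ℝ} (hc0 : 0 < c) (hc1 : c ≤ 1 / 2) (ht : 0 < t) :
    |(c * (t ^ c * log t) + t ^ c) / t| ≤ 2 * (1 + 1 / t) := by
  have hg : c * |t ^ c * log t| ≤ 1 + t := by
    calc c * |t ^ c * log t| ≤ c * (1 / c + 2 * t) := by
          gcongr; exact abs_rpow_mul_log_le hc0 hc1 ht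
      _ = 1 + 2 * c * t := by field_simp
      _ ≤ 1 + t := by nlinarith
  have hpow := rpow_le_one_add hc0.le (by linarith) ht.le (c := c)
  have hnum : |c * (t ^ c * log t) + t ^ c| ≤ 2 * (1 + t) := by
    calc |c * (t ^ c * log t) + t ^ c| ≤ c * |t ^ c * log t| + t ^ c := by
          refine (abs_add_le _ _).trans ?_
          rw [abs_mul, abs_of_pos hc0, abs_of_pos (rpow_pos_of_pos ht c)]
      _ ≤ 2 * (1 + t) := by linarith
  calc |(c * (t ^ c * log t) + t ^ c) / t| ≤ 2 * (1 + t) / t := by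
        rw [abs_div, abs_of_pos ht]; gcongr
    _ = 2 * (1 + 1 / t) := by field_simp; ring

lemma abs_sub_le_of_abs_deriv_le {f f' : ℝ → ℝ} {A M : ℝ} (hA : 0 ≤ A)
    (hf : ∀ t, 0 < t → HasDerivAt f (f' t) t) (hf' : ∀ t, 0 < t → |f' t| ≤ M * (1 + 1 / t))
    (hbound : ∀ t, 0 < t → |f t| ≤ A + M * t) {x y : ℝ} (hx : 0 < x) (hy : 0 < y) :
    |f y - f x| ≤ 4 * (A + M) * |y - x| * (1 + 1 / x) := by
  have hM : 0 ≤ M := by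
    have := (abs_nonneg _).trans (hf' 1 one_pos)
    linarith
  rcases le_or_gt (x / 2) y with hxy | hxy
  · have hderiv : ∀ t ∈ Set.Ici (x / 2), ‖f' t‖ ≤ M * (1 + 2 / x) := fun t ht ↦ by
      have ht0 : 0 < t := lt_of_lt_of_le (by positivity) ht
      have : 1 / t ≤ 2 / x := by
        rw [div_le_div_iff₀ ht0 hx]; linarith [Set.mem_Ici.mp ht]
      rw [norm_eq_abs]
      exact (hf' t ht0).trans (by gcongr)
    have hmvt := (convex_Ici (x / 2)).norm_image_sub_le_of_norm_hasDerivWithin_le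
      (fun t ht ↦ (hf t (lt_of_lt_of_le (by positivity) ht)).hasDerivWithinAt) hderiv
      (Set.mem_Ici.mpr (by linarith : x / 2 ≤ x)) (Set.mem_Ici.mpr hxy)
    rw [norm_eq_abs, norm_eq_abs] at hmvt
    have habs := abs_nonneg (y - x)
    calc |f y - f x| ≤ M * (1 + 2 / x) * |y - x| := hmvt
      _ ≤ 4 * (A + M) * |y - x| * (1 + 1 / x) := by
          have : M * (1 + 2 / x) ≤ 4 * (A + M) * (1 + 1 / x) := by
            rw [show 2 / x = 2 * (1 / x) by ring]
            have hx' := (one_div_pos.mpr hx).le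
            nlinarith [mul_nonneg hA hx', mul_nonneg hM hx']
          nlinarith
  · have hfar : x / 2 ≤ |y - x| := by rw [abs_sub_comm, abs_of_pos (by linarith)]; linarith
    calc |f y - f x| ≤ |f y| + |f x| := abs_sub _ _
      _ ≤ 2 * (A + M) * (x + 1) := by nlinarith [hbound y hy, hbound x hx]
      _ = 4 * (A + M) * (x / 2) * (1 + 1 / x) := by field_simp; ring
      _ ≤ 4 * (A + M) * |y - x| * (1 + 1 / x) := by gcongr

theorem stmt13_general (al au : ℝ) (h1 : 1 < al) (h3 : au < 2) :
    ∃ C : ℝ, 0 < C ∧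
      ∀ x y : ℝ, 0 < x → 0 < y → ∀ α ∈ Set.Icc al au,
        |y ^ (1 - α / 2) * Real.log (Real.sqrt y) - x ^ (1 - α / 2) * Real.log (Real.sqrt x)|
          ≤ C * |y - x| * (1 + 1 / x) := by
  set b := 1 - au / 2 with hb_def
  have hb : 0 < b := by linarith
  refine ⟨2 * (1 / b + 2), by positivity, fun x y hx hy α ⟨hal, hau⟩ ↦ ?_⟩
  set c := 1 - α / 2 with hc_def
  have hc0 : 0 < c := by linarith
  have hc1 : c ≤ 1 / 2 := by linarith
  have hcb : 1 / c ≤ 1 / b := one_div_le_one_div_of_le hb (by linarith)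
  have key := abs_sub_le_of_abs_deriv_le (A := 1 / b) (M := 2) (by positivity)
    (fun t ht ↦ hasDerivAt_rpow_mul_log c ht) (fun t ht ↦ abs_deriv_rpow_mul_log_le hc0 hc1 ht)
    (fun t ht ↦ (abs_rpow_mul_log_le hc0 hc1 ht).trans (by linarith)) hx hy
  rw [log_sqrt hy.le, log_sqrt hx.le, ← mul_div_assoc, ← mul_div_assoc, ← sub_div, abs_div,
    abs_two]
  linarith

/-- For `1 < a̲ ≤ ā < 2` there is `C > 0` such that for all `x, y > 0` and all
`α ∈ [a̲, ā]`, `|y^(1-α/2) ln √y - x^(1-α/2) ln √x| ≤ C |y - x| (1 + 1/x)`. -/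
theorem stmt13 (al au : ℝ) (h1 : 1 < al) (h2 : al ≤ au) (h3 : au < 2) :
    ∃ C : ℝ, 0 < C ∧
      ∀ x y : ℝ, 0 < x → 0 < y → ∀ α ∈ Set.Icc al au,
        |y ^ (1 - α / 2) * Real.log (Real.sqrt y) - x ^ (1 - α / 2) * Real.log (Real.sqrt x)|
          ≤ C * |y - x| * (1 + 1 / x) :=
  stmt13_general al au h1 h3
end
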